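/- Define w(n,i) := 4(n+1)(n−i)(n−i−1)(i−1)/(n(n−1)²·i²(i+1)²(i+2)(i+3)) and u(n,i1,i2) := 4(n+1)(i1−1)(n−i2)(n−i2−1)/(n(n−1)²·i1(i1+1)·i2(i2+1)(i2+2)(i2+3)). Then the sequence s_n := ∑_{i=1}^{n−1} w(n,i) + 2·∑_{1 ≤ i1 < i2 ≤ n−1} u(n,i1,i2), defined for integers n ≥ 2, converges as n → ∞ to 179/54 − π²/3. -/

import Mathlib

open Filter

/-- `w(n,i) = Var(V_i^{(n)})`. -/
noncomputable def wVar (n i : ℝ) : ℝ :=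
  4 * (n + 1) * (n - i) * (n - i - 1) * (i - 1) /
    (n * (n - 1) ^ 2 * i ^ 2 * (i + 1) ^ 2 * (i + 2) * (i + 3))

/-- `u(n,i1,i2) = Cov(V_{i1}^{(n)}, V_{i2}^{(n)})`. -/
noncomputable def uCov (n i1 i2 : ℝ) : ℝ :=
  4 * (n + 1) * (i1 - 1) * (n - i2) * (n - i2 - 1) /
    (n * (n - 1) ^ 2 * i1 * (i1 + 1) * i2 * (i2 + 1) * (i2 + 2) * (i2 + 3))

/-!
Write `αᵢ = covFst i` and `βⱼ = covSnd n j`. Then `u(n,i,j) = covScale n · αᵢβⱼ` and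
`w(n,i) = u(n,i,i)`, so `s_n = covScale n · (∑ᵢ αᵢβᵢ + 2 ∑_{i<j} αᵢβⱼ)`, where the double sum is
`(∑ α)(∑ β) - ∑ᵢ αᵢ ∑_{j≤i} βⱼ`. After partial fractions in the summation index, each of these sums
telescopes up to the harmonic numbers `H_{n-1}` and `H^{(2)}_{n-1}`, which gives the exact value
`s_n = R(n) - 8 H_{n-1} / (3n(n-1)²) - 2(n+1)(n+3) H^{(2)}_{n-1} / (n-1)²` with `R(n) → 179/54`.
Since `H_{n-1} ≤ n` and `H^{(2)}_{n-1} → ζ(2) = π²/6`, the limit is `179/54 - π²/3`.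
-/

open Finset

theorem sum_Icc_one_induction {M : Type*} [AddCommMonoid M] (f F : ℕ → M) (h0 : F 0 = 0)
    (hs : ∀ m, F (m + 1) = F m + f (m + 1)) (m : ℕ) : ∑ i ∈ Icc 1 m, f i = F m := by
  induction m with
  | zero => simp [h0]
  | succ m ih => rw [sum_Icc_succ_top (by omega), ih, hs]

theorem sum_Icc_succ_eq_sub {M : Type*} [AddCommGroup M] (f : ℕ → M) {k m : ℕ} (h : k ≤ m) :
    ∑ i ∈ Icc (k + 1) m, f i = ∑ i ∈ Icc 1 m, f i - ∑ i ∈ Icc 1 k, f i := by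
  have hIcc (n : ℕ) : Icc 1 n = Ioc 0 n := Icc_add_one_left_eq_Ioc 0 n
  rw [eq_sub_iff_add_eq', Icc_add_one_left_eq_Ioc, hIcc, hIcc]
  exact sum_Ioc_consecutive f (Nat.zero_le k) h

theorem sum_mul_sum_Icc_succ {R : Type*} [CommRing R] (f g : ℕ → R) (m : ℕ) :
    ∑ i ∈ Icc 1 m, f i * ∑ j ∈ Icc (i + 1) m, g j =
      (∑ i ∈ Icc 1 m, f i) * ∑ j ∈ Icc 1 m, g j - ∑ i ∈ Icc 1 m, f i * ∑ j ∈ Icc 1 i, g j := by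
  rw [sum_mul, ← sum_sub_distrib]
  refine sum_congr rfl fun i hi => ?_
  rw [sum_Icc_succ_eq_sub g (mem_Icc.mp hi).2, mul_sub]

noncomputable def harmonicSq (n : ℕ) : ℝ := ∑ i ∈ range n, 1 / ((i : ℝ) + 1) ^ 2

theorem harmonicSq_succ (n : ℕ) : harmonicSq (n + 1) = harmonicSq n + 1 / ((n : ℝ) + 1) ^ 2 :=
  sum_range_succ ..

theorem tendsto_harmonicSq : Tendsto harmonicSq atTop (nhds (Real.pi ^ 2 / 6)) := by
  convert ((hasSum_nat_add_iff' 1).mpr hasSum_zeta_two).tendsto_sum_nat using 2 with n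
  · simp [harmonicSq]
  · simp

theorem harmonic_le_self (n : ℕ) : harmonic n ≤ n := by
  induction n with
  | zero => simp
  | succ n ih =>
    rw [harmonic_succ, Nat.cast_succ]
    gcongr
    exact inv_le_one_of_one_le₀ (by simp)

theorem tendsto_of_eventually_eq_comp_inv {f : ℕ → ℝ} {g : ℝ → ℝ} (hg : ContinuousAt g 0)
    (hfg : ∀ᶠ n : ℕ in atTop, g (n : ℝ)⁻¹ = f n) : Tendsto f atTop (nhds (g 0)) :=
  (hg.tendsto.comp (tendsto_inv_atTop_zero.comp tendsto_natCast_atTop_atTop)).congr' hfg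

noncomputable def covScale (x : ℝ) : ℝ := 4 * (x + 1) / (x * (x - 1) ^ 2)
noncomputable def covFst (i : ℝ) : ℝ := (i - 1) / (i * (i + 1))
noncomputable def covSnd (x i : ℝ) : ℝ :=
  (x - i) * (x - i - 1) / (i * (i + 1) * (i + 2) * (i + 3))

-- No side conditions: both sides are the same quotient, so `_ / 0 = 0` does no harm.
theorem uCov_eq (x i j : ℝ) : uCov x i j = covScale x * (covFst i * covSnd x j) := by
  rw [uCov, covScale, covFst, covSnd, div_mul_div_comm, div_mul_div_comm]
  congr 1 <;> ring

theorem wVar_eq_uCov (x i : ℝ) : wVar x i = uCov x i i := by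
  rw [wVar, uCov]
  congr 1 <;> ring

theorem sum_covFst (m : ℕ) : ∑ i ∈ Icc 1 m, covFst i = harmonic m + 2 / ((m : ℝ) + 1) - 2 := by
  refine sum_Icc_one_induction _ (fun m => (harmonic m : ℝ) + 2 / ((m : ℝ) + 1) - 2) (by norm_num)
    (fun m => ?_) m
  simp only [harmonic_succ, covFst]
  push_cast
  field_simp
  ring

/- In the closed forms below `y` is the upper summation index, and `a`, `b` stand for
`harmonic y` and `harmonicSq y`. -/
noncomputable def sumSndClosed (x y : ℝ) : ℝ :=
  (x - x ^ 2) / (6 * (y + 1)) + (2 * x + x ^ 2) / (3 * (y + 2))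
    - (6 + 5 * x + x ^ 2) / (6 * (y + 3)) + (x ^ 2 - 4 * x + 6) / 18

noncomputable def sumFstSndClosed (x y b : ℝ) : ℝ :=
  -(5 * x + 7 * x ^ 2) / 6 * b + (-x - x ^ 2) / (y + 1) ^ 2
    + (6 + 11 * x - 23 * x ^ 2) / (36 * (y + 1))
    - (30 + 61 * x + 23 * x ^ 2) / (36 * (y + 2))
    + (6 + 5 * x + x ^ 2) / (9 * (y + 3)) + (6 + 293 * x + 415 * x ^ 2) / 216

noncomputable def sumFstSumSndClosed (x y a b : ℝ) : ℝ :=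
  (x ^ 2 - 4 * x + 6) / 18 * a + (x - x ^ 2) / 3 * b + (x - x ^ 2) / (3 * (y + 1) ^ 2)
    + (x ^ 2 - 4 * x + 6) / (18 * (y + 1)) + (12 - 8 * x - 7 * x ^ 2) / (18 * (y + 2))
    + (6 + 5 * x + x ^ 2) / (9 * (y + 3)) + (-96 - 8 * x + 47 * x ^ 2) / 108

theorem sum_covSnd (x : ℝ) (m : ℕ) : ∑ i ∈ Icc 1 m, covSnd x i = sumSndClosed x m := by
  refine sum_Icc_one_induction _ (fun m => sumSndClosed x m) (by norm_num [sumSndClosed]; ring)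
    (fun m => ?_) m
  simp only [sumSndClosed, covSnd]
  push_cast
  field_simp
  ring

theorem sum_covFst_mul_covSnd (x : ℝ) (m : ℕ) :
    ∑ i ∈ Icc 1 m, covFst i * covSnd x i = sumFstSndClosed x m (harmonicSq m) := by
  refine sum_Icc_one_induction _ (fun m => sumFstSndClosed x m (harmonicSq m))
    (by norm_num [sumFstSndClosed, harmonicSq]; ring) (fun m => ?_) m
  simp only [sumFstSndClosed, harmonicSq_succ, covFst, covSnd]
  push_cast
  field_simp
  ring

theorem sum_covFst_mul_sum_covSnd (x : ℝ) (m : ℕ) :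
    ∑ i ∈ Icc 1 m, covFst i * ∑ j ∈ Icc 1 i, covSnd x j =
      sumFstSumSndClosed x m (harmonic m) (harmonicSq m) := by
  simp only [sum_covSnd]
  refine sum_Icc_one_induction _ (fun m => sumFstSumSndClosed x m (harmonic m) (harmonicSq m))
    (by norm_num [sumFstSumSndClosed, harmonicSq]; ring) (fun m => ?_) m
  simp only [sumFstSumSndClosed, harmonic_succ, harmonicSq_succ, covFst, sumSndClosed]
  push_cast
  field_simp
  ring

theorem covScale_mul_closed (x a b : ℝ) (hx : 1 < x) :
    covScale x * (sumFstSndClosed x (x - 1) b +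
      2 * ((a + 2 / x - 2) * sumSndClosed x (x - 1) - sumFstSumSndClosed x (x - 1) a b)) =
    (179 * x ^ 3 + 767 * x ^ 2 + 900 * x + 468) / (54 * x ^ 2 * (x - 1))
      - 8 * a / (3 * x * (x - 1) ^ 2) - 2 * (x + 1) * (x + 3) * b / (x - 1) ^ 2 := by
  have hx0 : x ≠ 0 := by linarith
  have hx1 : x - 1 ≠ 0 := by linarith
  have hx2 : x + 1 ≠ 0 := by linarith
  have hx3 : x + 2 ≠ 0 := by linarith
  simp only [covScale, sumFstSndClosed, sumSndClosed, sumFstSumSndClosed, sub_add_cancel]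
  rw [show x - 1 + 2 = x + 1 by ring, show x - 1 + 3 = x + 2 by ring]
  field_simp
  ring

theorem variance_sum_eq (n : ℕ) (hn : 2 ≤ n) :
    (∑ i ∈ Icc 1 (n - 1), wVar n i) +
        2 * ∑ i1 ∈ Icc 1 (n - 1), ∑ i2 ∈ Icc (i1 + 1) (n - 1), uCov n i1 i2 =
      (179 * (n : ℝ) ^ 3 + 767 * (n : ℝ) ^ 2 + 900 * n + 468) / (54 * (n : ℝ) ^ 2 * (n - 1))
        - 8 * harmonic (n - 1) / (3 * (n : ℝ) * (n - 1) ^ 2)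
        - 2 * ((n : ℝ) + 1) * (n + 3) * harmonicSq (n - 1) / ((n : ℝ) - 1) ^ 2 := by
  have hcast : ((n - 1 : ℕ) : ℝ) = n - 1 := Nat.cast_pred (by omega)
  simp only [wVar_eq_uCov, uCov_eq, ← mul_sum]
  rw [sum_mul_sum_Icc_succ (fun i : ℕ => covFst i) (fun j : ℕ => covSnd n j), sum_covFst,
    sum_covSnd, sum_covFst_mul_covSnd, sum_covFst_mul_sum_covSnd, hcast, sub_add_cancel,
    ← covScale_mul_closed _ _ _ (by exact_mod_cast hn)]
  ring

theorem tendsto_variance_rational_part :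
    Tendsto (fun n : ℕ => (179 * (n : ℝ) ^ 3 + 767 * (n : ℝ) ^ 2 + 900 * n + 468) /
      (54 * (n : ℝ) ^ 2 * (n - 1))) atTop (nhds (179 / 54)) := by
  convert tendsto_of_eventually_eq_comp_inv
    (g := fun t => (179 + 767 * t + 900 * t ^ 2 + 468 * t ^ 3) / (54 * (1 - t)))
    (by fun_prop (disch := norm_num)) ?_ using 2
  · norm_num
  filter_upwards [eventually_gt_atTop 1] with n hn
  have : (1 : ℝ) < n := by exact_mod_cast hn
  field_simp

theorem tendsto_harmonicSq_coeff :
    Tendsto (fun n : ℕ => 2 * ((n : ℝ) + 1) * (n + 3) / ((n : ℝ) - 1) ^ 2) atTop (nhds 2) := by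
  convert tendsto_of_eventually_eq_comp_inv (g := fun t => 2 * (1 + t) * (1 + 3 * t) / (1 - t) ^ 2)
    (by fun_prop (disch := norm_num)) ?_ using 2
  · norm_num
  filter_upwards [eventually_gt_atTop 1] with n hn
  have : (1 : ℝ) < n := by exact_mod_cast hn
  field_simp

theorem tendsto_harmonic_term :
    Tendsto (fun n : ℕ => 8 * harmonic (n - 1) / (3 * (n : ℝ) * (n - 1) ^ 2)) atTop (nhds 0) := by
  have hbound : Tendsto (fun n : ℕ => 8 / (3 * ((n : ℝ) - 1) ^ 2)) atTop (nhds 0) := by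
    convert tendsto_of_eventually_eq_comp_inv (g := fun t => 8 * t ^ 2 / (3 * (1 - t) ^ 2))
      (by fun_prop (disch := norm_num)) ?_ using 2
    · norm_num
    filter_upwards [eventually_gt_atTop 1] with n hn
    have : (1 : ℝ) < n := by exact_mod_cast hn
    field_simp
  refine squeeze_zero' ?_ ?_ hbound <;> filter_upwards [eventually_gt_atTop 1] with n hn
  · have : (0 : ℝ) < harmonic (n - 1) := by exact_mod_cast harmonic_pos (by omega)
    positivity
  · have hn' : (1 : ℝ) < n := by exact_mod_cast hn
    have hH : (harmonic (n - 1) : ℝ) ≤ n := by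
      exact_mod_cast (harmonic_le_self (n - 1)).trans (by exact_mod_cast Nat.sub_le n 1)
    calc 8 * (harmonic (n - 1) : ℝ) / (3 * n * (n - 1) ^ 2)
        ≤ 8 * n / (3 * n * (n - 1) ^ 2) := by gcongr
      _ = 8 / (3 * ((n : ℝ) - 1) ^ 2) := by field_simp

/-- `Var(∑_{i=1}^{n−1} V_i^{(n)}) → 179/54 − π²/3` as `n → ∞`. -/
theorem stmt8 :
    Tendsto (fun n : ℕ =>
        (∑ i ∈ Finset.Icc 1 (n - 1), wVar n i) +
          2 * ∑ i1 ∈ Finset.Icc 1 (n - 1), ∑ i2 ∈ Finset.Icc (i1 + 1) (n - 1), uCov n i1 i2)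
      atTop (nhds (179 / 54 - Real.pi ^ 2 / 3)) := by
  have hlim := (tendsto_variance_rational_part.sub tendsto_harmonic_term).sub
    (tendsto_harmonicSq_coeff.mul (tendsto_harmonicSq.comp (tendsto_sub_atTop_nat 1)))
  rw [show (179 : ℝ) / 54 - 0 - 2 * (Real.pi ^ 2 / 6) = 179 / 54 - Real.pi ^ 2 / 3 by ring] at hlim
  refine hlim.congr' ?_
  filter_upwards [eventually_ge_atTop 2] with n hn
  rw [variance_sum_eq n hn, Function.comp_apply]
  ring
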